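/- arXiv:1011.0111 — 4 statements merged into one kernel-verified Lean document; each statement's English description precedes it below -/
import Mathlib

section
/- Let P be a probability measure on (Ω^{𝓔,d}, F^{𝓔,d}), let T be a finite (for every ω) {F_t^{𝓔,d}}-stopping time, and let Q be a probability kernel from (Ω^{𝓔,d}, F^{𝓔,d}_T) to (Ω^{𝓔,d}, F^{𝓔,d}). Then there exists a unique probability measure P ⊗_T Q on (Ω^{𝓔,d}, F^{𝓔,d}) such that (a) (P ⊗_T Q)[A] = P[A] for all A ∈ F^{𝓔,d}_T, and (b) for every F ∈ F^{𝓔,d}, the random variable ω ↦ (δ_ω ⊗_{T(ω)} Q(ω,·))[F] is a version of the conditional probability (P ⊗_T Q)[F | F^{𝓔,d}_T]. -/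
open MeasureTheory Filter Set
open scoped ENNReal NNReal Topology

noncomputable section

namespace Mimic

/-- Lebesgue measure on `[0,∞)`, modeled as `ℝ≥0`. -/
def leb : Measure ℝ≥0 := (volume : Measure ℝ).comap (↑·)

variable (E : Type*) [MeasurableSpace E] (V : Type*) [NormedAddCommGroup V]

/-- The space `C_0` of continuous paths `[0,∞) → V` vanishing at `0`, with the
topology of uniform convergence on compact sets (compact-open topology). -/
def C0 : Type _ := {x : C(ℝ≥0, V) // x 0 = 0}

instance : TopologicalSpace (C0 V) := inferInstanceAs (TopologicalSpace {x : C(ℝ≥0, V) // x 0 = 0})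
instance : MeasurableSpace (C0 V) := borel _
instance : BorelSpace (C0 V) := ⟨rfl⟩

variable {E V}

/-- The value of a path in `C0` at time `t`. -/
def C0.eval (x : C0 V) (t : ℝ≥0) : V := x.1 t

/-- The stopping operator `∇(x,t) := x(· ∧ t)` on continuous maps. -/
def stopCM (x : C(ℝ≥0, V)) (t : ℝ≥0) : C(ℝ≥0, V) :=
  x.comp ⟨fun s => min s t, continuous_id.min continuous_const⟩

/-- The stopping operator on `C0`. -/
def stop0 (x : C0 V) (t : ℝ≥0) : C0 V :=
  ⟨stopCM x.1 t, by
    simp only [stopCM, ContinuousMap.comp_apply, ContinuousMap.coe_mk]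
    rw [min_eq_left (zero_le : 0 ≤ t)]
    exact x.2⟩

/-- The difference operator `Δ(x,t) := x(t+·) − x(t)`, valued in `C0`. -/
def delta (x : C(ℝ≥0, V)) (t : ℝ≥0) : C0 V :=
  ⟨⟨fun s => x (t + s) - x t,
    ((x.continuous.comp (continuous_const.add continuous_id)).sub continuous_const)⟩,
    by simp⟩

/-- The shift operator `Θ(x,t) := x(t+·)` for `t ≥ 0`. -/
def shiftCM {α : Type*} [TopologicalSpace α] (x : C(ℝ≥0, α)) (t : ℝ≥0) : C(ℝ≥0, α) :=
  x.comp ⟨fun s => t + s, continuous_const.add continuous_id⟩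

lemma continuous_stop0 (t : ℝ≥0) : Continuous (fun x : C0 V => stop0 x t) := by
  apply Continuous.subtype_mk
  exact (ContinuousMap.continuous_precomp _).comp continuous_subtype_val

variable (E V)

/-- The canonical space `Ω^{𝓔,d} = 𝓔 × C_0`, with σ-field `𝔈 ⊗ σ(X)`. -/
abbrev OmegaEd : Type _ := E × C0 V

/-- The map `ω = (e,x) ↦ (e, x(·∧t))`. -/
def stopPair (t : ℝ≥0) : OmegaEd E V → OmegaEd E V := fun ω => (ω.1, stop0 ω.2 t)

lemma measurable_stopPair (t : ℝ≥0) : Measurable (stopPair E V t) :=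
  measurable_fst.prodMk (((continuous_stop0 (V := V) t).measurable).comp measurable_snd)

/-- The canonical filtration `F_t^{𝓔,d} := 𝔈 ⊗ σ(X^t)` on `Ω^{𝓔,d}`. -/
def FF : Filtration ℝ≥0 (inferInstance : MeasurableSpace (OmegaEd E V)) where
  seq t := MeasurableSpace.comap (stopPair E V t) inferInstance
  mono' := by
    intro s t hst
    have hcomp : stopPair E V s = (stopPair E V s) ∘ (stopPair E V t) := by
      funext ω
      simp only [Function.comp_apply, stopPair, stop0, stopCM]
      refine Prod.ext rfl (Subtype.ext (ContinuousMap.ext fun u => ?_))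
      simp only [ContinuousMap.comp_apply, ContinuousMap.coe_mk]
      rw [min_eq_left ((min_le_right u s).trans hst)]
    calc MeasurableSpace.comap (stopPair E V s) inferInstance
        = MeasurableSpace.comap (stopPair E V t)
            (MeasurableSpace.comap (stopPair E V s) inferInstance) := by
          nth_rewrite 1 [hcomp]
          exact MeasurableSpace.comap_comp.symm
      _ ≤ MeasurableSpace.comap (stopPair E V t) inferInstance :=
          MeasurableSpace.comap_mono
            (measurable_iff_comap_le.mp (measurable_stopPair E V s))
  le' t := measurable_iff_comap_le.mp (measurable_stopPair E V t)

variable {E V}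

/-- The σ-field `σ(Δ(X,T))` generated by the increments of the coordinate
process after the random time `T`. -/
def sigmaDelta (T : OmegaEd E V → ℝ≥0) : MeasurableSpace (OmegaEd E V) :=
  MeasurableSpace.comap (fun ω => delta ω.2.1 (T ω)) inferInstance

/-- The σ-field `σ(Δ(X^{T'},T))` generated by the increments of the coordinate
process stopped at `T'` after the random time `T`. -/
def sigmaDeltaStopped (T' T : OmegaEd E V → ℝ≥0) : MeasurableSpace (OmegaEd E V) :=
  MeasurableSpace.comap (fun ω => delta (stop0 ω.2 (T' ω)).1 (T ω)) inferInstance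

end Mimic

namespace Mimic
/-- Measures on the canonical space `Ω^{𝓔,d}` with respect to the canonical
product σ-field `F^{𝓔,d} = 𝔈 ⊗ σ(X)` (this abbreviation pins down the
σ-field, so that it is unaffected by local σ-field variables). -/
abbrev OmegaMeasure (E : Type*) [MeasurableSpace E] (V : Type*) [NormedAddCommGroup V] :
    Type _ :=
  @Measure (OmegaEd E V) Prod.instMeasurableSpace
end Mimic

namespace Mimic

variable {E : Type*} [MeasurableSpace E] {V : Type*} [NormedAddCommGroup V]

/-- The path `s ↦ x̄(s∧t) + x(s) − x(s∧t)`, i.e. the second component of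
`Ψ_{ω̄,t}(e,x) = (ē, ∇(x̄,t) + x − ∇(x,t))`. -/
def psiPath (xbar x : C0 V) (t : ℝ≥0) : C0 V :=
  ⟨⟨fun s => xbar.1 (min s t) + x.1 s - x.1 (min s t),
    ((xbar.1.continuous.comp (continuous_id.min continuous_const)).add
        x.1.continuous).sub
      (x.1.continuous.comp (continuous_id.min continuous_const))⟩,
    by
      simp only [ContinuousMap.coe_mk]
      rw [min_eq_left (zero_le : 0 ≤ t), xbar.2, x.2]
      simp⟩

/-- The concatenation map `Ψ_{ω̄,t}(e,x) := (ē, ∇(x̄,t) + x − ∇(x,t))`. -/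
def Psi (obar : OmegaEd E V) (t : ℝ≥0) : OmegaEd E V → OmegaEd E V :=
  fun ω => (obar.1, psiPath obar.2 ω.2 t)

/-- The measure `δ_ω̄ ⊗_t Q := Q ∘ Ψ_{ω̄,t}^{-1}`. -/
def deltaConcat (obar : OmegaEd E V) (t : ℝ≥0) (Q : Measure (OmegaEd E V)) :
    Measure (OmegaEd E V) :=
  Q.map (Psi obar t)

end Mimic

/-!
Let `κ ω := δ_ω ⊗_{T ω} Q(ω, ·)`. Every path `Ψ_{ω,T ω}(ω')` coincides with `ω` up to time
`T ω`, so by Galmarino's test it lies in each `A ∈ F_T` containing `ω`: the kernel `κ` is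
concentrated on the `F_T`-atom of its base point, `κ ω A = 1_A(ω)`. For such a kernel the mixture
`μ := ∫ κ ω dP(ω)` satisfies `μ (F ∩ A) = ∫_A κ(·)(F) dP` for `A ∈ F_T`, which gives both `μ = P`
on `F_T` and that `κ(·)(F)` is a version of `μ[1_F | F_T]`. Conversely, if `μ` has these two
properties then `μ F = ∫ κ(·)(F) dμ = ∫ κ(·)(F) dP`, because `κ(·)(F)` is `F_T`-measurable; this
is uniqueness. The `F_T`-measurability of `κ` comes from the progressive measurability of the
stopped path process, which has continuous trajectories.
-/

open ProbabilityTheory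

namespace Mimic

section ConcentratedKernel

variable {Ω : Type*} {m mΩ : MeasurableSpace Ω}

lemma integral_eq_of_forall_measurableSet_eq {G : Type*} [NormedAddCommGroup G] [NormedSpace ℝ G]
    (hm : m ≤ mΩ) {μ ν : Measure Ω} (hμν : ∀ A, MeasurableSet[m] A → μ A = ν A) {g : Ω → G}
    (hg : StronglyMeasurable[m] g) : ∫ ω, g ω ∂μ = ∫ ω, g ω ∂ν := by
  have htrim : μ.trim hm = ν.trim hm := by
    refine @Measure.ext _ m _ _ fun A hA => ?_
    rw [trim_measurableSet_eq hm hA, trim_measurableSet_eq hm hA, hμν A hA]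
  rw [integral_trim hm hg, htrim, ← integral_trim hm hg]

variable {P : Measure Ω} {κ : Kernel[m, mΩ] Ω Ω}

lemma measureReal_eq_integral_kernel (hm : m ≤ mΩ) {ρ : Measure Ω} [IsProbabilityMeasure ρ]
    (hρP : ∀ A, MeasurableSet[m] A → ρ A = P A) {F : Set Ω} (hF : MeasurableSet F)
    (hρκ : (fun ω => (κ ω F).toReal) =ᵐ[ρ] ρ[F.indicator (fun _ => (1 : ℝ)) | m]) :
    ρ.real F = ∫ ω, (κ ω F).toReal ∂P :=
  calc ρ.real F = ∫ ω, ρ[F.indicator (fun _ => (1 : ℝ)) | m] ω ∂ρ := by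
        rw [integral_condExp hm]
        exact (integral_indicator_one hF).symm
    _ = ∫ ω, (κ ω F).toReal ∂ρ := integral_congr_ae hρκ.symm
    _ = ∫ ω, (κ ω F).toReal ∂P := integral_eq_of_forall_measurableSet_eq hm hρP
        (κ.measurable_coe hF).ennreal_toReal.stronglyMeasurable

variable [IsMarkovKernel κ]

lemma measure_inter_eq_indicator_of_concentrated (hm : m ≤ mΩ)
    (hκ : ∀ ω A, MeasurableSet[m] A → ω ∈ A → κ ω A = 1) (F : Set Ω) {A : Set Ω}
    (hA : MeasurableSet[m] A) (ω : Ω) :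
    κ ω (F ∩ A) = A.indicator (fun ω' => κ ω' F) ω := by
  by_cases hω : ω ∈ A
  · rw [indicator_of_mem hω]
    exact measure_inter_conull ((prob_compl_eq_zero_iff (hm A hA)).2 (hκ ω A hA hω))
  · rw [indicator_of_notMem hω]
    refine measure_mono_null inter_subset_right ?_
    exact (prob_compl_eq_one_iff (hm A hA)).1 (hκ ω Aᶜ hA.compl hω)

lemma bind_apply_inter_of_concentrated (hm : m ≤ mΩ)
    (hκ : ∀ ω A, MeasurableSet[m] A → ω ∈ A → κ ω A = 1) {F A : Set Ω} (hF : MeasurableSet F)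
    (hA : MeasurableSet[m] A) :
    P.bind κ (F ∩ A) = ∫⁻ ω in A, κ ω F ∂P := by
  rw [Measure.bind_apply (hF.inter (hm A hA)) (κ.measurable.mono hm le_rfl).aemeasurable]
  simp_rw [measure_inter_eq_indicator_of_concentrated hm hκ F hA]
  exact lintegral_indicator (hm A hA) _

lemma bind_apply_of_concentrated (hm : m ≤ mΩ)
    (hκ : ∀ ω A, MeasurableSet[m] A → ω ∈ A → κ ω A = 1) {A : Set Ω} (hA : MeasurableSet[m] A) :
    P.bind κ A = P A := by
  simpa using bind_apply_inter_of_concentrated (P := P) hm hκ MeasurableSet.univ hA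

lemma isProbabilityMeasure_bind_of_concentrated [IsProbabilityMeasure P] (hm : m ≤ mΩ)
    (hκ : ∀ ω A, MeasurableSet[m] A → ω ∈ A → κ ω A = 1) : IsProbabilityMeasure (P.bind κ) :=
  ⟨by rw [bind_apply_of_concentrated hm hκ .univ, measure_univ]⟩

lemma integrable_toReal_kernel [IsFiniteMeasure P] (hm : m ≤ mΩ) {F : Set Ω}
    (hF : MeasurableSet F) :
    Integrable (fun ω => (κ ω F).toReal) P := by
  refine Integrable.of_bound ?_ 1 (ae_of_all _ fun ω => ?_)
  · exact ((κ.measurable_coe hF).ennreal_toReal.mono hm le_rfl).aestronglyMeasurable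
  · rw [Real.norm_of_nonneg ENNReal.toReal_nonneg]
    exact measureReal_le_one (μ := κ ω)

lemma toReal_kernel_ae_eq_condExp_bind [IsProbabilityMeasure P] (hm : m ≤ mΩ)
    (hκ : ∀ ω A, MeasurableSet[m] A → ω ∈ A → κ ω A = 1) {F : Set Ω} (hF : MeasurableSet F) :
    (fun ω => (κ ω F).toReal) =ᵐ[P.bind κ] (P.bind κ)[F.indicator (fun _ => (1 : ℝ)) | m] := by
  have hagree : ∀ A, MeasurableSet[m] A → P.bind κ A = P A :=
    fun A hA => bind_apply_of_concentrated hm hκ hA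
  have := isProbabilityMeasure_bind_of_concentrated (P := P) hm hκ
  have hg : StronglyMeasurable[m] fun ω => (κ ω F).toReal :=
    (κ.measurable_coe hF).ennreal_toReal.stronglyMeasurable
  refine ae_eq_condExp_of_forall_setIntegral_eq hm ((integrable_const 1).indicator hF)
    (fun s _ _ => (integrable_toReal_kernel hm hF).integrableOn) (fun s hs _ => ?_)
    hg.aestronglyMeasurable
  calc ∫ ω in s, (κ ω F).toReal ∂P.bind κ
      = ∫ ω in s, (κ ω F).toReal ∂P := by
        rw [← integral_indicator (hm s hs), ← integral_indicator (hm s hs)]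
        exact integral_eq_of_forall_measurableSet_eq hm hagree (hg.indicator hs)
    _ = (P.bind κ).real (F ∩ s) := by
        rw [integral_toReal ((κ.measurable_coe hF).mono hm le_rfl).aemeasurable.restrict
          (ae_of_all _ fun ω => measure_lt_top _ _), measureReal_def,
          bind_apply_inter_of_concentrated hm hκ hF hs]
    _ = ∫ ω in s, F.indicator (fun _ => (1 : ℝ)) ω ∂P.bind κ := by
        rw [setIntegral_indicator hF, setIntegral_const, smul_eq_mul, mul_one, inter_comm]

theorem existsUnique_measure_condExp_indicator_eq_kernel [IsProbabilityMeasure P] (hm : m ≤ mΩ)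
    (hκ : ∀ ω A, MeasurableSet[m] A → ω ∈ A → κ ω A = 1) :
    ∃! μ : Measure Ω, IsProbabilityMeasure μ ∧ (∀ A, MeasurableSet[m] A → μ A = P A) ∧
      ∀ F, MeasurableSet F →
        (fun ω => (κ ω F).toReal) =ᵐ[μ] μ[F.indicator (fun _ => (1 : ℝ)) | m] := by
  have hagree : ∀ A, MeasurableSet[m] A → P.bind κ A = P A :=
    fun A hA => bind_apply_of_concentrated hm hκ hA
  have hprob := isProbabilityMeasure_bind_of_concentrated (P := P) hm hκ
  refine ⟨P.bind κ, ⟨hprob, hagree,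
    fun F hF => toReal_kernel_ae_eq_condExp_bind hm hκ hF⟩, ?_⟩
  rintro ρ ⟨hρ, hρP, hρκ⟩
  refine Measure.ext fun F hF => (measureReal_eq_measureReal_iff ..).1 ?_
  rw [measureReal_eq_integral_kernel hm hρP hF (hρκ F hF),
    measureReal_eq_integral_kernel hm hagree hF (toReal_kernel_ae_eq_condExp_bind hm hκ hF)]

end ConcentratedKernel

lemma measurable_map_of_measurable_uncurry {α β γ : Type*} {mα : MeasurableSpace α}
    [MeasurableSpace β] [MeasurableSpace γ] (κ : Kernel α β) [IsSFiniteKernel κ]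
    {f : α → β → γ} (hf : Measurable (Function.uncurry f)) :
    Measurable fun a => (κ a).map (f a) := by
  refine Measure.measurable_of_measurable_coe _ fun s hs => ?_
  have hmap : ∀ a, (κ a).map (f a) s = κ a (Prod.mk a ⁻¹' (Function.uncurry f ⁻¹' s)) :=
    fun a => Measure.map_apply (hf.comp measurable_prodMk_left) hs
  simp_rw [hmap]
  exact Kernel.measurable_kernel_prodMk_left (hf hs)

section PathSpace

variable {E : Type*} {V : Type*} [NormedAddCommGroup V]

lemma continuous_stopCM_uncurry : Continuous fun p : C(ℝ≥0, V) × ℝ≥0 => stopCM p.1 p.2 := by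
  have hmin : Continuous fun t : ℝ≥0 =>
      (⟨fun s => min s t, continuous_id.min continuous_const⟩ : C(ℝ≥0, ℝ≥0)) :=
    ContinuousMap.continuous_of_continuous_uncurry _ (continuous_snd.min continuous_fst)
  exact ContinuousMap.continuous_comp'.comp ((hmin.comp continuous_snd).prodMk continuous_fst)

lemma continuous_stop0_uncurry : Continuous fun p : C0 V × ℝ≥0 => stop0 p.1 p.2 :=
  continuous_stopCM_uncurry.comp
    ((continuous_subtype_val.comp continuous_fst).prodMk continuous_snd) |>.subtype_mk _

lemma continuous_psiPath_uncurry :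
    Continuous fun p : C0 V × C0 V × ℝ≥0 => psiPath p.1 p.2.1 p.2.2 := by
  have hstop : ∀ {f : C0 V × C0 V × ℝ≥0 → C0 V}, Continuous f →
      Continuous fun p => stopCM (f p).1 p.2.2 := fun hf =>
    continuous_stopCM_uncurry.comp
      ((continuous_subtype_val.comp hf).prodMk (continuous_snd.comp continuous_snd))
  refine Continuous.subtype_mk ?_ _
  exact ((hstop continuous_fst).add (continuous_subtype_val.comp
    (continuous_fst.comp continuous_snd))).sub (hstop (continuous_fst.comp continuous_snd))

lemma continuous_psiPath (xbar : C0 V) (t : ℝ≥0) : Continuous fun x : C0 V => psiPath xbar x t :=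
  continuous_psiPath_uncurry.comp (continuous_const.prodMk (continuous_id.prodMk continuous_const))

lemma psiPath_stop0 (xbar x : C0 V) (t : ℝ≥0) : psiPath (stop0 xbar t) x t = psiPath xbar x t := by
  apply Subtype.ext; ext u
  show xbar.1 (min (min u t) t) + x.1 u - x.1 (min u t) = xbar.1 (min u t) + x.1 u - x.1 (min u t)
  rw [min_eq_left (min_le_right u t)]

lemma stopPair_Psi (obar ω : OmegaEd E V) (t : ℝ≥0) :
    stopPair E V t (Psi obar t ω) = stopPair E V t obar := by
  refine Prod.ext rfl (Subtype.ext (ContinuousMap.ext fun u => ?_))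
  show obar.2.1 (min (min u t) t) + ω.2.1 (min u t) - ω.2.1 (min (min u t) t) = obar.2.1 (min u t)
  rw [min_eq_left (min_le_right u t), add_sub_cancel_right]

variable [MeasurableSpace E] {T : OmegaEd E V → ℝ≥0}

lemma measurable_Psi (obar : OmegaEd E V) (t : ℝ≥0) : Measurable (Psi obar t) :=
  measurable_const.prodMk ((continuous_psiPath obar.2 t).measurable.comp measurable_snd)

lemma mem_of_stopPair_eq (hT : IsStoppingTime (FF E V) (fun ω => (T ω : WithTop ℝ≥0)))
    {A : Set (OmegaEd E V)} (hA : MeasurableSet[hT.measurableSpace] A)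
    {ω ω' : OmegaEd E V} (hω : ω ∈ A) (h : stopPair E V (T ω) ω' = stopPair E V (T ω) ω) :
    ω' ∈ A := by
  obtain ⟨B, -, hB⟩ := hA.2 (T ω)
  have hωB : ω ∈ stopPair E V (T ω) ⁻¹' B := hB ▸ ⟨hω, mem_ofPred.2 le_rfl⟩
  have hω'B : ω' ∈ stopPair E V (T ω) ⁻¹' B := by rw [mem_preimage, h]; exact hωB
  exact (hB ▸ hω'B).1

lemma deltaConcat_apply_of_mem (hT : IsStoppingTime (FF E V) (fun ω => (T ω : WithTop ℝ≥0)))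
    {Q : Measure (OmegaEd E V)} [IsProbabilityMeasure Q] {A : Set (OmegaEd E V)}
    (hA : MeasurableSet[hT.measurableSpace] A) {ω : OmegaEd E V} (hω : ω ∈ A) :
    deltaConcat ω (T ω) Q A = 1 := by
  have hPsi : Psi ω (T ω) ⁻¹' A = univ :=
    eq_univ_of_forall fun ω' => mem_of_stopPair_eq hT hA hω (stopPair_Psi ω ω' (T ω))
  rw [deltaConcat, Measure.map_apply (measurable_Psi ω (T ω)) (hT.measurableSpace_le A hA), hPsi,
    measure_univ]

lemma measurable_fst_stoppingTime (hT : IsStoppingTime (FF E V) (fun ω => (T ω : WithTop ℝ≥0))) :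
    Measurable[hT.measurableSpace] fun ω : OmegaEd E V => ω.1 :=
  (measurable_fst.comp (comap_measurable (stopPair E V 0))).mono
    (hT.le_measurableSpace_of_const_le fun _ => bot_le) le_rfl

lemma measurable_stoppingTime (hT : IsStoppingTime (FF E V) (fun ω => (T ω : WithTop ℝ≥0))) :
    Measurable[hT.measurableSpace] T :=
  (WithTop.measurable_untopD 0).comp hT.measurable

variable [SecondCountableTopology V]

instance : SecondCountableTopology (C0 V) :=
  Topology.IsInducing.subtypeVal.secondCountableTopology

instance : TopologicalSpace.PseudoMetrizableSpace (C0 V) :=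
  Topology.IsInducing.subtypeVal.pseudoMetrizableSpace

lemma measurable_stop0_stoppingTime (hT : IsStoppingTime (FF E V) (fun ω => (T ω : WithTop ℝ≥0))) :
    Measurable[hT.measurableSpace] fun ω : OmegaEd E V => stop0 ω.2 (T ω) := by
  have hadapted : StronglyAdapted (FF E V) fun t (ω : OmegaEd E V) => stop0 ω.2 t := fun t =>
    (measurable_snd.comp (comap_measurable (stopPair E V t))).stronglyMeasurable
  exact measurable_stoppedValue (hadapted.isStronglyProgressive_of_continuous fun ω =>
    continuous_stop0_uncurry.comp (continuous_const.prodMk continuous_id)) hT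

lemma measurable_Psi_stoppingTime (hT : IsStoppingTime (FF E V) (fun ω => (T ω : WithTop ℝ≥0))) :
    Measurable[hT.measurableSpace.prod inferInstance]
      (Function.uncurry fun ω ω' : OmegaEd E V => Psi ω (T ω) ω') := by
  -- `Ψ_{ω,T ω}` sees `ω` only through `ω.1`, `T ω` and `ω.2` stopped at `T ω`.
  have hPsi : (Function.uncurry fun ω ω' : OmegaEd E V => Psi ω (T ω) ω')
      = fun p => (p.1.1, psiPath (stop0 p.1.2 (T p.1)) p.2.2 (T p.1)) := by
    funext p
    exact congrArg (Prod.mk p.1.1) (psiPath_stop0 p.1.2 p.2.2 (T p.1)).symm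
  rw [hPsi]
  exact ((measurable_fst_stoppingTime hT).comp measurable_fst).prodMk
    (continuous_psiPath_uncurry.measurable.comp
      (((measurable_stop0_stoppingTime hT).comp measurable_fst).prodMk
        (measurable_snd.snd.prodMk ((measurable_stoppingTime hT).comp measurable_fst))))

def concatKernel (hT : IsStoppingTime (FF E V) (fun ω => (T ω : WithTop ℝ≥0)))
    (Q : Kernel[hT.measurableSpace] (OmegaEd E V) (OmegaEd E V)) [IsSFiniteKernel Q] :
    Kernel[hT.measurableSpace] (OmegaEd E V) (OmegaEd E V) :=
  @Kernel.mk _ _ hT.measurableSpace _ (fun ω => deltaConcat ω (T ω) (Q ω))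
    (measurable_map_of_measurable_uncurry Q (measurable_Psi_stoppingTime hT))

instance (hT : IsStoppingTime (FF E V) (fun ω => (T ω : WithTop ℝ≥0)))
    (Q : Kernel[hT.measurableSpace] (OmegaEd E V) (OmegaEd E V)) [IsMarkovKernel Q] :
    IsMarkovKernel (concatKernel hT Q) :=
  ⟨fun ω => Measure.isProbabilityMeasure_map (μ := Q ω) (measurable_Psi ω (T ω)).aemeasurable⟩

end PathSpace

theorem measure_kernel_concat_exists_unique_general
    {E : Type} [MeasurableSpace E]
    {d : ℕ}
    (P : Measure (OmegaEd E (EuclideanSpace ℝ (Fin d)))) [IsProbabilityMeasure P]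
    (T : OmegaEd E (EuclideanSpace ℝ (Fin d)) → ℝ≥0)
    (hT : IsStoppingTime (FF E (EuclideanSpace ℝ (Fin d))) (fun ω => (T ω : WithTop ℝ≥0)))
    -- `Q` is a probability kernel from `(Ω, F_T)` to `(Ω, F)`
    (Q : OmegaEd E (EuclideanSpace ℝ (Fin d)) → Measure (OmegaEd E (EuclideanSpace ℝ (Fin d))))
    (hQprob : ∀ ω, IsProbabilityMeasure (Q ω))
    (hQmeas : ∀ A : Set (OmegaEd E (EuclideanSpace ℝ (Fin d))), MeasurableSet A →
      Measurable[hT.measurableSpace] (fun ω => Q ω A)) :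
    ∃! μ : Measure (OmegaEd E (EuclideanSpace ℝ (Fin d))),
      IsProbabilityMeasure μ ∧
      (∀ A, MeasurableSet[hT.measurableSpace] A → μ A = P A) ∧
      (∀ F : Set (OmegaEd E (EuclideanSpace ℝ (Fin d))), MeasurableSet F →
        (fun ω => (deltaConcat ω (T ω) (Q ω) F).toReal)
          =ᵐ[μ] μ[F.indicator (fun _ => (1 : ℝ)) | hT.measurableSpace]) := by
  let Qκ : Kernel[hT.measurableSpace] _ _ :=
    @Kernel.mk _ _ hT.measurableSpace _ Q (Measure.measurable_of_measurable_coe _ hQmeas)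
  have : IsMarkovKernel Qκ := ⟨hQprob⟩
  exact existsUnique_measure_condExp_indicator_eq_kernel (κ := concatKernel hT Qκ)
    hT.measurableSpace_le fun ω A hA hω => deltaConcat_apply_of_mem hT hA hω

/-- **Proposition (concatenation of a measure and a kernel at a stopping time).**
Given a probability measure `P` on `(Ω^{𝓔,d}, F^{𝓔,d})`, an everywhere finite
stopping time `T`, and a probability kernel `Q` from `(Ω^{𝓔,d}, F^{𝓔,d}_T)` to
`(Ω^{𝓔,d}, F^{𝓔,d})`, there is a unique probability measure `P ⊗_T Q` agreeing
with `P` on `F^{𝓔,d}_T` and such that for each `F ∈ F^{𝓔,d}`, the map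
`ω ↦ (δ_ω ⊗_{T(ω)} Q(ω,·))[F]` is a version of `(P ⊗_T Q)[F | F^{𝓔,d}_T]`. -/
theorem measure_kernel_concat_exists_unique
    {E : Type} [TopologicalSpace E] [PolishSpace E] [MeasurableSpace E] [BorelSpace E]
    {d : ℕ} (hd : 0 < d)
    (P : Measure (OmegaEd E (EuclideanSpace ℝ (Fin d)))) [IsProbabilityMeasure P]
    (T : OmegaEd E (EuclideanSpace ℝ (Fin d)) → ℝ≥0)
    (hT : IsStoppingTime (FF E (EuclideanSpace ℝ (Fin d))) (fun ω => (T ω : WithTop ℝ≥0)))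
    -- `Q` is a probability kernel from `(Ω, F_T)` to `(Ω, F)`
    (Q : OmegaEd E (EuclideanSpace ℝ (Fin d)) → Measure (OmegaEd E (EuclideanSpace ℝ (Fin d))))
    (hQprob : ∀ ω, IsProbabilityMeasure (Q ω))
    (hQmeas : ∀ A : Set (OmegaEd E (EuclideanSpace ℝ (Fin d))), MeasurableSet A →
      Measurable[hT.measurableSpace] (fun ω => Q ω A)) :
    ∃! μ : Measure (OmegaEd E (EuclideanSpace ℝ (Fin d))),
      IsProbabilityMeasure μ ∧
      (∀ A, MeasurableSet[hT.measurableSpace] A → μ A = P A) ∧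
      (∀ F : Set (OmegaEd E (EuclideanSpace ℝ (Fin d))), MeasurableSet F →
        (fun ω => (deltaConcat ω (T ω) (Q ω) F).toReal)
          =ᵐ[μ] μ[F.indicator (fun _ => (1 : ℝ)) | hT.measurableSpace]) :=
  measure_kernel_concat_exists_unique_general P T hT Q hQprob hQmeas

end Mimic
end
end

section
/- Let 𝓔 be a Polish space with Borel σ-field 𝔈, let Z be a jointly measurable 𝓔-valued stochastic process on a probability space (Ω, F, P), and let Γ be a jointly measurable ℝ^d-valued (respectively, d×d matrix-valued) process taking values in a closed convex set K and satisfying E[∫_0^t ‖Γ_u‖ du] < ∞ for all t ≥ 0. Then there exists a nonrandom ℝ^d-valued (respectively, d×d matrix-valued) measurable function Γ̂ on [0,∞) × 𝓔 taking values in K, and a Lebesgue-null set N ⊂ [0,∞), such that Γ̂(t, Z_t) = E[Γ_t | Z_t] almost surely for every t ∈ N^c. -/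
/-!
The kernel `t ↦ Law(Z_t, Γ_t)` disintegrates as `Law(Z_t) ⊗ κ(t, ·)` for a single Markov kernel `κ`
on `[0,∞) × 𝓔`, for every `t` at once (a conditional kernel exists because the Borel σ-field of `𝓔`
is countably generated). So `κ(t, ·)` is a regular conditional distribution of `Γ_t` given `Z_t`,
and `Γ̂(t, e) := ∫ y κ((t, e), dy)` represents `E[Γ_t | Z_t]` whenever `Γ_t` is integrable, which by
Tonelli fails only on a Lebesgue-null set of times. As `κ(t, Z_t)` is a.s. carried by the closed
convex set `K`, its barycenter lies in `K`; elsewhere `Γ̂` is replaced by a fixed point of `K`.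
-/

open MeasureTheory Filter Set
open scoped ENNReal NNReal Topology

noncomputable section

namespace Mimic

open ProbabilityTheory

instance : IsFiniteMeasureOnCompacts leb where
  lt_top_of_isCompact _ hK := by
    rw [leb, NNReal.isometry_coe.isClosedEmbedding.measurableEmbedding.comap_apply]
    exact (hK.image NNReal.continuous_coe).measure_lt_top

theorem ae_integrable_of_lintegral_setLIntegral_lt_top {T Ω F : Type*} [MeasurableSpace T]
    [MeasurableSpace Ω] [NormedAddCommGroup F] [MeasurableSpace F] [OpensMeasurableSpace F]
    [SecondCountableTopology F]
    {μ : Measure T} [SFinite μ] {P : Measure Ω} [SFinite P]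
    {f : T → Ω → F} (hf : Measurable (Function.uncurry f)) {S : ℕ → Set T} (hS : ⋃ n, S n = univ)
    (h : ∀ n, ∫⁻ ω, (∫⁻ u in S n, ‖f u ω‖ₑ ∂μ) ∂P < ⊤) :
    ∀ᵐ t ∂μ, Integrable (f t) P := by
  rw [← Measure.restrict_univ (μ := μ), ← hS, ae_restrict_iUnion_iff]
  intro n
  specialize h n
  have hmeas : Measurable (Function.uncurry fun ω u => ‖f u ω‖ₑ) := (hf.comp measurable_swap).enorm
  have hswap : ∫⁻ u in S n, (∫⁻ ω, ‖f u ω‖ₑ ∂P) ∂μ < ⊤ := by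
    rwa [← lintegral_lintegral_swap hmeas.aemeasurable]
  filter_upwards [ae_lt_top (hf.enorm.lintegral_prod_right') hswap.ne] with t ht
  exact ⟨(hf.comp measurable_prodMk_left).aestronglyMeasurable, ht⟩

section LawKernel

variable {T Ω E F : Type*} [MeasurableSpace T] [MeasurableSpace Ω] [MeasurableSpace E]
  [MeasurableSpace F] {P : Measure Ω} [IsProbabilityMeasure P]

def lawKernel (P : Measure Ω) [IsProbabilityMeasure P] (X : T → Ω → E)
    (hX : Measurable (Function.uncurry X)) : Kernel T E where
  toFun t := P.map (X t)
  measurable' := Measure.measurable_of_measurable_coe _ fun s hs => by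
    have hXt (t : T) : Measurable (X t) := hX.comp measurable_prodMk_left
    simp_rw [Measure.map_apply (hXt _) hs]
    exact measurable_measure_prodMk_left (hX hs)

instance {X : T → Ω → E} (hX : Measurable (Function.uncurry X)) :
    IsMarkovKernel (lawKernel P X hX) :=
  ⟨fun _ => Measure.isProbabilityMeasure_map (hX.comp measurable_prodMk_left).aemeasurable⟩

theorem map_eq_compProd_condKernel_lawKernel [StandardBorelSpace F] [Nonempty F]
    [MeasurableSpace.CountableOrCountablyGenerated T E]
    {W : T → Ω → E × F} (hW : Measurable (Function.uncurry W)) (t : T) :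
    P.map (W t) = P.map (fun ω => (W t ω).1) ⊗ₘ (lawKernel P W hW).condKernel.sectR t := by
  have hfst : (lawKernel P W hW).fst t = P.map (fun ω => (W t ω).1) :=
    Measure.map_map measurable_fst (hW.comp measurable_prodMk_left)
  rw [← hfst, ← Kernel.compProd_apply_eq_compProd_sectR, Kernel.disintegrate]
  rfl

end LawKernel

section CompProd

variable {Ω E F : Type*} [MeasurableSpace Ω] [MeasurableSpace E]
  [NormedAddCommGroup F] [NormedSpace ℝ F] [CompleteSpace F] [MeasurableSpace F] [BorelSpace F]
  [SecondCountableTopology F] {P : Measure Ω} [IsProbabilityMeasure P]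
  {X : Ω → E} {Y : Ω → F} {κ : Kernel E F}

theorem condExp_ae_eq_integral_of_map_eq_compProd [IsFiniteKernel κ] (hX : Measurable X)
    (hY : Measurable Y) (hYint : Integrable Y P) (h : P.map (fun ω => (X ω, Y ω)) = P.map X ⊗ₘ κ) :
    P[Y | MeasurableSpace.comap X inferInstance] =ᵐ[P] fun ω => ∫ y, y ∂κ (X ω) := by
  filter_upwards [condExp_ae_eq_integral_condDistrib' hX hYint, ae_of_ae_map hX.aemeasurable
    (condDistrib_ae_eq_of_measure_eq_compProd_of_measurable hX hY h)] with ω hcond hκ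
  rw [hcond, hκ]

theorem ae_integral_mem_of_map_eq_compProd [IsMarkovKernel κ] {K : Set F} (hKclosed : IsClosed K)
    (hKconv : Convex ℝ K) (hX : Measurable X) (hY : Measurable Y) (hYint : Integrable Y P)
    (hYK : ∀ᵐ ω ∂P, Y ω ∈ K) (h : P.map (fun ω => (X ω, Y ω)) = P.map X ⊗ₘ κ) :
    ∀ᵐ ω ∂P, ∫ y, y ∂κ (X ω) ∈ K := by
  have hXY : Measurable fun ω => (X ω, Y ω) := hX.prodMk hY
  have hcarried : ∀ᵐ e ∂P.map X, ∀ᵐ y ∂κ e, y ∈ K := by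
    refine Measure.ae_ae_of_ae_compProd (p := fun x => x.2 ∈ K) ?_
    rw [← h, ae_map_iff hXY.aemeasurable (measurable_snd hKclosed.measurableSet)]
    exact hYK
  have hint : ∀ᵐ e ∂P.map X, Integrable (fun y => y) (κ e) := by
    have hsnd : Integrable Prod.snd (P.map fun ω => (X ω, Y ω)) :=
      (integrable_map_measure measurable_snd.aestronglyMeasurable hXY.aemeasurable).2 hYint
    rw [h] at hsnd
    exact ((Measure.integrable_compProd_iff hsnd.1).1 hsnd).1
  filter_upwards [ae_of_ae_map hX.aemeasurable (hcarried.and hint)] with ω ⟨hω, hωint⟩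
  exact hKconv.integral_mem hKclosed hω hωint

end CompProd

theorem conditional_expectation_function_exists_general
    {E : Type} [TopologicalSpace E] [PolishSpace E] [MeasurableSpace E] [BorelSpace E]
    {Ω : Type} [MeasurableSpace Ω]
    (P : Measure Ω) [IsProbabilityMeasure P]
    {d : ℕ}
    (Z : ℝ≥0 → Ω → E) (hZ : Measurable (Function.uncurry Z))
    (Γ : ℝ≥0 → Ω → EuclideanSpace ℝ (Fin d))
    (hΓ : Measurable (Function.uncurry Γ))
    (K : Set (EuclideanSpace ℝ (Fin d))) (hKclosed : IsClosed K) (hKconv : Convex ℝ K)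
    (hΓK : ∀ t ω, Γ t ω ∈ K)
    -- `E[∫_0^t ‖Γ_u‖ du] < ∞` for all `t ≥ 0`
    (hΓint : ∀ t : ℝ≥0, ∫⁻ ω, (∫⁻ u in Set.Iic t, (‖Γ u ω‖₊ : ℝ≥0∞) ∂leb) ∂P < ⊤) :
    ∃ Γhat : ℝ≥0 × E → EuclideanSpace ℝ (Fin d),
      Measurable Γhat ∧ (∀ p, Γhat p ∈ K) ∧
      ∃ N : Set ℝ≥0, leb N = 0 ∧
        ∀ t ∉ N,
          (fun ω => Γhat (t, Z t ω))
            =ᵐ[P] P[Γ t | MeasurableSpace.comap (Z t) inferInstance] := by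
  classical
  obtain ⟨ω₀⟩ := nonempty_of_isProbabilityMeasure P
  have hW : Measurable (Function.uncurry fun t ω => (Z t ω, Γ t ω)) := hZ.prodMk hΓ
  set κ := (lawKernel P _ hW).condKernel
  set v : ℝ≥0 × E → EuclideanSpace ℝ (Fin d) := fun p => ∫ y, y ∂κ p
  have hv : Measurable v :=
    (measurable_snd.stronglyMeasurable.integral_kernel_prod_right' (κ := κ)).measurable
  refine ⟨fun p => if v p ∈ K then v p else Γ 0 ω₀,
    Measurable.ite (hv hKclosed.measurableSet) hv measurable_const,
    fun p => by dsimp only; split_ifs with h; exacts [h, hΓK 0 ω₀],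
    {t | ¬ Integrable (Γ t) P}, ?_, ?_⟩
  · exact ae_integrable_of_lintegral_setLIntegral_lt_top hΓ
      (iUnion_eq_univ_iff.2 fun t => ⟨⌈t⌉₊, mem_Iic.2 (Nat.le_ceil t)⟩) fun n => hΓint n
  · intro t ht
    have hZt : Measurable (Z t) := hZ.comp measurable_prodMk_left
    have hΓt : Measurable (Γ t) := hΓ.comp measurable_prodMk_left
    have hdis := map_eq_compProd_condKernel_lawKernel (P := P) hW t
    have hint : Integrable (Γ t) P := not_not.1 ht
    filter_upwards [condExp_ae_eq_integral_of_map_eq_compProd hZt hΓt hint hdis,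
      ae_integral_mem_of_map_eq_compProd hKclosed hKconv hZt hΓt hint (ae_of_all _ (hΓK t)) hdis]
      with ω hcond hmem
    simp only [Kernel.sectR_apply] at hcond hmem
    exact (if_pos hmem).trans hcond.symm

/-- **Proposition.** Let `𝓔` be a Polish space, `Z` a jointly measurable
`𝓔`-valued process, and `Γ` a jointly measurable `ℝ^d`-valued process taking
values in a closed convex set `K` with `E ∫_0^t ‖Γ_u‖ du < ∞` for all `t`.
Then there is a nonrandom measurable function `Γ̂ : [0,∞) × 𝓔 → K` and a
Lebesgue-null set `N ⊂ [0,∞)` with `Γ̂(t,Z_t) = E[Γ_t | Z_t]` for `t ∉ N`. -/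
theorem conditional_expectation_function_exists
    {E : Type} [TopologicalSpace E] [PolishSpace E] [MeasurableSpace E] [BorelSpace E]
    {Ω : Type} [MeasurableSpace Ω]
    (P : Measure Ω) [IsProbabilityMeasure P]
    {d : ℕ} (hd : 0 < d)
    (Z : ℝ≥0 → Ω → E) (hZ : Measurable (Function.uncurry Z))
    (Γ : ℝ≥0 → Ω → EuclideanSpace ℝ (Fin d))
    (hΓ : Measurable (Function.uncurry Γ))
    (K : Set (EuclideanSpace ℝ (Fin d))) (hKclosed : IsClosed K) (hKconv : Convex ℝ K)
    (hΓK : ∀ t ω, Γ t ω ∈ K)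
    -- `E[∫_0^t ‖Γ_u‖ du] < ∞` for all `t ≥ 0`
    (hΓint : ∀ t : ℝ≥0, ∫⁻ ω, (∫⁻ u in Set.Iic t, (‖Γ u ω‖₊ : ℝ≥0∞) ∂leb) ∂P < ⊤) :
    ∃ Γhat : ℝ≥0 × E → EuclideanSpace ℝ (Fin d),
      Measurable Γhat ∧ (∀ p, Γhat p ∈ K) ∧
      ∃ N : Set ℝ≥0, leb N = 0 ∧
        ∀ t ∉ N,
          (fun ω => Γhat (t, Z t ω))
            =ᵐ[P] P[Γ t | MeasurableSpace.comap (Z t) inferInstance] :=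
  conditional_expectation_function_exists_general P Z hZ Γ hΓ K hKclosed hKconv hΓK hΓint
end Mimic
end
end

section
/- Let 𝓔 be a Polish space with Borel σ-field 𝔈, let Z be a jointly measurable 𝓔-valued stochastic process on a probability space (Ω, F, P), and let Γ be a jointly measurable real-valued process satisfying E ∫_0^t |Γ_u| du < ∞ for all t ≥ 0. Let Γ̂ be a nonrandom real-valued measurable function on [0,∞) × 𝓔. Then there exists a Lebesgue-null set N ⊂ [0,∞) such that Γ̂(t, Z_t) = E[Γ_t | Z_t] almost surely for all t ∈ N^c, if and only if for every bounded B[0,∞) ⊗ 𝔈-measurable real-valued function f one has E ∫_0^t Γ̂(u, Z_u) f(u, Z_u) du = E ∫_0^t Γ_u f(u, Z_u) du for all t ≥ 0. -/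
/-!
Both conditions are handled one time `u` at a time; Fubini on `[0,t] × Ω` passes between the
pointwise and the time-integrated statements.

(⇒) By the pull-out property, `E[Γ̂(u,Z_u) f(u,Z_u)] = E[Γ_u f(u,Z_u)]` for a.e. `u`, and the
`L¹`-contraction of conditional expectation makes `Γ̂(u,Z_u)` integrable on `[0,t] × Ω`.

(⇐) Testing against the truncated sign of `Γ̂` bounds `∫_{|Γ̂| ≤ n} |Γ̂|` by `∫ |Γ|`, so
`Γ̂(u,Z_u)` is integrable on `[0,t] × Ω`. Testing against `1_B(u) 1_A(x)` shows that for every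
Borel `A`, `E[(Γ̂(u,Z_u) - Γ_u) 1_A(Z_u)] = 0` for a.e. `u`. As `𝔈` is countably generated, one
null set serves every `A` of a countable generating π-system, and a Dynkin argument extends the
identity to all of `σ(Z_u)`, which characterises `E[Γ_u | Z_u]`.
-/

open MeasureTheory Filter Set
open scoped ENNReal NNReal Topology

noncomputable section

namespace Mimic

open MeasurableSpace

instance isFiniteMeasure_leb_restrict_Iic (t : ℝ≥0) : IsFiniteMeasure (leb.restrict (Iic t)) := by
  refine isFiniteMeasure_restrict.2 (ne_of_lt ?_)
  calc leb (Iic t) ≤ volume (((↑) : ℝ≥0 → ℝ) '' Iic t) :=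
        Measure.comap_apply_le _ _ measurableSet_Iic.nullMeasurableSet
    _ ≤ volume (Icc (0 : ℝ) t) := measure_mono <| by
        rintro _ ⟨u, hu, rfl⟩
        exact ⟨u.2, hu⟩
    _ < ∞ := measure_Icc_lt_top

lemma ae_of_forall_ae_restrict_Iic {μ : Measure ℝ≥0} {p : ℝ≥0 → Prop}
    (h : ∀ n : ℕ, ∀ᵐ u ∂μ.restrict (Iic (n : ℝ≥0)), p u) : ∀ᵐ u ∂μ, p u := by
  have hcover : ⋃ n : ℕ, Iic (n : ℝ≥0) = univ :=
    eq_univ_of_forall fun u => mem_iUnion.2 (exists_nat_ge u)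
  rw [← Measure.restrict_univ (μ := μ), ← hcover]
  exact (ae_restrict_iUnion_iff _ _).2 h

lemma countable_generatePiSystem {α : Type*} {S : Set (Set α)} (hS : S.Countable) :
    (generatePiSystem S).Countable := by
  refine ((countable_ofPred_finite_subset hS).image sInter).mono fun t ht => ?_
  induction ht with
  | base hs => exact ⟨{_}, ⟨finite_singleton _, singleton_subset_iff.2 hs⟩, sInter_singleton _⟩
  | inter _ _ _ ihs iht =>
    obtain ⟨F, ⟨hF, hFS⟩, rfl⟩ := ihs
    obtain ⟨G, ⟨hG, hGS⟩, rfl⟩ := iht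
    exact ⟨F ∪ G, ⟨hF.union hG, union_subset hFS hGS⟩, sInter_union F G⟩

lemma exists_countable_isPiSystem_generateFrom_eq (E : Type*) [m : MeasurableSpace E]
    [CountablyGenerated E] :
    ∃ S : Set (Set E), S.Countable ∧ IsPiSystem S ∧ univ ∈ S ∧ m = generateFrom S :=
  ⟨insert univ (generatePiSystem (countableGeneratingSet E)),
    (countable_generatePiSystem countable_countableGeneratingSet).insert univ,
    (isPiSystem_generatePiSystem _).insert_univ, mem_insert _ _, by
      rw [MeasurableSpace.generateFrom_insert_univ, generateFrom_generatePiSystem_eq,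
        generateFrom_countableGeneratingSet]⟩

section CondExp

variable {Ω E : Type*} [mΩ : MeasurableSpace Ω] [MeasurableSpace E] {P : Measure Ω}

lemma lintegral_enorm_le_of_ae_eq_condExp {m : MeasurableSpace Ω} {X g : Ω → ℝ}
    (hg : g =ᵐ[P] P[X|m]) : ∫⁻ ω, ‖g ω‖ₑ ∂P ≤ ∫⁻ ω, ‖X ω‖ₑ ∂P := by
  have h := eLpNorm_condExp_le_eLpNorm (μ := P) (m := m) X le_rfl
  rwa [← eLpNorm_congr_ae hg, eLpNorm_one_eq_lintegral_enorm, eLpNorm_one_eq_lintegral_enorm] at h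

lemma integral_mul_eq_of_ae_eq_condExp [IsFiniteMeasure P] {m : MeasurableSpace Ω} (hm : m ≤ mΩ)
    {X g φ : Ω → ℝ} (hX : Integrable X P) (hg : g =ᵐ[P] P[X|m]) (hφ : StronglyMeasurable[m] φ)
    {C : ℝ} (hφC : ∀ ω, |φ ω| ≤ C) : ∫ ω, g ω * φ ω ∂P = ∫ ω, X ω * φ ω ∂P := by
  have hφX : Integrable (φ * X) P :=
    hX.bdd_mul (hφ.mono hm).aestronglyMeasurable (ae_of_all _ hφC)
  calc ∫ ω, g ω * φ ω ∂P = ∫ ω, (φ * P[X|m]) ω ∂P :=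
        integral_congr_ae <| hg.mono fun ω hω => by simp [hω, mul_comm]
    _ = ∫ ω, P[φ * X|m] ω ∂P :=
        integral_congr_ae (condExp_mul_of_stronglyMeasurable_left hφ hφX hX).symm
    _ = ∫ ω, X ω * φ ω ∂P := by
        rw [integral_condExp hm]
        simp only [Pi.mul_apply, mul_comm]

lemma integral_mul_indicator_one_comp {Y : Ω → E} (hY : Measurable Y) (X : Ω → ℝ) {A : Set E}
    (hA : MeasurableSet A) : ∫ ω, X ω * A.indicator 1 (Y ω) ∂P = ∫ ω in Y ⁻¹' A, X ω ∂P := by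
  rw [← integral_indicator (hY hA)]
  congr with ω
  by_cases h : Y ω ∈ A <;> simp [h]

lemma setIntegral_preimage_eq_zero_of_isPiSystem {Y : Ω → E} (hY : Measurable Y) {G : Ω → ℝ}
    (hG : Integrable G P) {S : Set (Set E)} (hgen : ‹MeasurableSpace E› = generateFrom S)
    (hpi : IsPiSystem S) (huniv : univ ∈ S) (hS : ∀ A ∈ S, ∫ ω in Y ⁻¹' A, G ω ∂P = 0)
    {A : Set E} (hA : MeasurableSet A) : ∫ ω in Y ⁻¹' A, G ω ∂P = 0 := by
  induction A, hA using MeasurableSpace.induction_on_inter hgen hpi with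
  | empty => simp
  | basic A hA => exact hS A hA
  | compl A hA hA_eq =>
    have h := integral_add_compl (hY hA) hG
    have hu := hS univ huniv
    rw [preimage_univ, setIntegral_univ] at hu
    rw [hA_eq, zero_add, hu] at h
    rwa [preimage_compl]
  | iUnion A hA_disj hA hA_eq =>
    rw [preimage_iUnion, integral_iUnion (fun i => hY (hA i))
      (hA_disj.mono fun _ _ h => h.preimage Y) hG.integrableOn]
    simp [hA_eq]

lemma ae_eq_condExp_comap_of_isPiSystem [IsFiniteMeasure P] {Y : Ω → E} (hY : Measurable Y)
    {X : Ω → ℝ} (hX : Integrable X P) {g : E → ℝ} (hg : Measurable g)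
    (hgY : Integrable (fun ω => g (Y ω)) P) {S : Set (Set E)}
    (hgen : ‹MeasurableSpace E› = generateFrom S) (hpi : IsPiSystem S) (huniv : univ ∈ S)
    (hS : ∀ A ∈ S, ∫ ω in Y ⁻¹' A, (g (Y ω) - X ω) ∂P = 0) :
    (fun ω => g (Y ω)) =ᵐ[P] P[X|MeasurableSpace.comap Y inferInstance] := by
  refine ae_eq_condExp_of_forall_setIntegral_eq hY.comap_le hX (fun _ _ _ => hgY.integrableOn)
    (fun s hs _ => ?_) (hg.comp (comap_measurable Y)).aestronglyMeasurable
  obtain ⟨A, hA, rfl⟩ := hs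
  rw [← sub_eq_zero, ← integral_sub hgY.integrableOn hX.integrableOn]
  exact setIntegral_preimage_eq_zero_of_isPiSystem hY (hgY.sub hX) hgen hpi huniv hS hA

end CondExp

lemma abs_indicator_one_le_one {α : Type*} (s : Set α) (a : α) :
    |s.indicator (1 : α → ℝ) a| ≤ 1 := by
  simpa using norm_indicator_le_norm_self (s := s) (f := (1 : α → ℝ)) (a := a)

-- `r / |r|` is the sign of `r`, thanks to `0 / 0 = 0`.
def truncSign (n r : ℝ) : ℝ := {r : ℝ | |r| ≤ n}.indicator (fun r => r / |r|) r

lemma measurable_truncSign (n : ℝ) : Measurable (truncSign n) :=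
  (measurable_id.div measurable_id.abs).indicator
    (measurableSet_le measurable_id.abs measurable_const)

lemma abs_truncSign_le_one (n r : ℝ) : |truncSign n r| ≤ 1 := by
  unfold truncSign
  by_cases h : |r| ≤ n
  · simpa [h, abs_div] using div_self_le_one |r|
  · simp [h]

lemma mul_truncSign (n r : ℝ) : r * truncSign n r = {r : ℝ | |r| ≤ n}.indicator abs r := by
  unfold truncSign
  by_cases h : r ∈ {r : ℝ | |r| ≤ n}
  · rw [indicator_of_mem h, indicator_of_mem h, mul_div_assoc', ← abs_mul_abs_self,
      mul_self_div_self]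
  · rw [indicator_of_notMem h, indicator_of_notMem h, mul_zero]

lemma abs_mul_truncSign_le {n : ℝ} (hn : 0 ≤ n) (r : ℝ) : |r * truncSign n r| ≤ n := by
  rw [mul_truncSign]
  by_cases hr : r ∈ {r : ℝ | |r| ≤ n}
  · rwa [indicator_of_mem hr, abs_abs]
  · rwa [indicator_of_notMem hr, abs_zero]

lemma integrable_mul_truncSign {α : Type*} [MeasurableSpace α] {μ : Measure α}
    [IsFiniteMeasure μ] {G : α → ℝ} (hG : Measurable G) (n : ℕ) :
    Integrable (fun x => G x * truncSign n (G x)) μ :=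
  .of_bound (hG.mul ((measurable_truncSign n).comp hG)).aestronglyMeasurable n
    (ae_of_all _ fun _ => abs_mul_truncSign_le n.cast_nonneg _)

lemma integrable_of_forall_integral_mul_truncSign_eq {α : Type*} [MeasurableSpace α]
    {μ : Measure α} [IsFiniteMeasure μ] {G H : α → ℝ} (hG : Measurable G) (hH : Integrable H μ)
    (h : ∀ n : ℕ, ∫ x, G x * truncSign n (G x) ∂μ = ∫ x, H x * truncSign n (G x) ∂μ) :
    Integrable G μ := by
  set S : ℕ → Set α := fun n => {x | |G x| ≤ n}
  have hS : ⋃ n, S n = univ := eq_univ_of_forall fun x => mem_iUnion.2 (exists_nat_ge |G x|)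
  have hS_mono : Monotone S := fun m n hmn x (hx : |G x| ≤ m) => hx.trans (Nat.cast_le.2 hmn)
  have hS_le (n : ℕ) : ∫⁻ x in S n, ‖G x‖ₑ ∂μ ≤ ENNReal.ofReal (∫ x, |H x| ∂μ) := by
    have hGS : ∀ x, G x * truncSign n (G x) = (S n).indicator (fun x => |G x|) x := fun x => by
      rw [mul_truncSign]; rfl
    calc ∫⁻ x in S n, ‖G x‖ₑ ∂μ = ∫⁻ x, ENNReal.ofReal (G x * truncSign n (G x)) ∂μ := by
          rw [← lintegral_indicator (measurableSet_le hG.abs measurable_const)]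
          congr with x
          rw [hGS]
          by_cases hx : x ∈ S n
          · rw [indicator_of_mem hx, indicator_of_mem hx, Real.enorm_eq_ofReal_abs]
          · rw [indicator_of_notMem hx, indicator_of_notMem hx, ENNReal.ofReal_zero]
      _ = ENNReal.ofReal (∫ x, G x * truncSign n (G x) ∂μ) := by
          refine (ofReal_integral_eq_lintegral_ofReal (integrable_mul_truncSign hG n)
            (ae_of_all _ fun x => ?_)).symm
          simp only [hGS]
          exact indicator_nonneg (fun _ _ => abs_nonneg _) _
      _ ≤ ENNReal.ofReal (∫ x, |H x| ∂μ) := by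
          refine ENNReal.ofReal_le_ofReal ((le_abs_self _).trans ?_)
          rw [h n, ← Real.norm_eq_abs]
          refine norm_integral_le_of_norm_le hH.abs (ae_of_all _ fun x => ?_)
          rw [Real.norm_eq_abs, abs_mul]
          exact mul_le_of_le_one_right (abs_nonneg _) (abs_truncSign_le_one _ _)
  refine ⟨hG.aestronglyMeasurable, ?_⟩
  calc ∫⁻ x, ‖G x‖ₑ ∂μ = ⨆ n, ∫⁻ x in S n, ‖G x‖ₑ ∂μ := by
        rw [← setLIntegral_iUnion_of_directed _ hS_mono.directed_le, hS, setLIntegral_univ]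
    _ ≤ ENNReal.ofReal (∫ x, |H x| ∂μ) := iSup_le hS_le
    _ < ∞ := ENNReal.ofReal_lt_top

section TimeIntegral

variable {T Ω E : Type*} [MeasurableSpace T] [MeasurableSpace Ω] [MeasurableSpace E]
  {μ : Measure T} {P : Measure Ω} {Z : T → Ω → E} {Γ : T → Ω → ℝ} {Γhat : T × E → ℝ}

lemma integrable_uncurry_of_lintegral_lt_top [SFinite μ] [SFinite P]
    (hΓ : Measurable (Function.uncurry Γ))
    (h : ∫⁻ ω, ∫⁻ u, (‖Γ u ω‖₊ : ℝ≥0∞) ∂μ ∂P < ⊤) :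
    Integrable (Function.uncurry Γ) (μ.prod P) :=
  ⟨hΓ.aestronglyMeasurable, by
    rwa [HasFiniteIntegral, lintegral_prod_symm _ hΓ.enorm.aemeasurable]⟩

lemma integrable_prod_of_ae_lintegral_enorm_le [SFinite μ] [SFinite P] {F G : T × Ω → ℝ}
    (hF : Measurable F) (hG : Integrable G (μ.prod P))
    (h : ∀ᵐ u ∂μ, ∫⁻ ω, ‖F (u, ω)‖ₑ ∂P ≤ ∫⁻ ω, ‖G (u, ω)‖ₑ ∂P) : Integrable F (μ.prod P) := by
  refine ⟨hF.aestronglyMeasurable, ?_⟩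
  calc ∫⁻ q, ‖F q‖ₑ ∂μ.prod P = ∫⁻ u, ∫⁻ ω, ‖F (u, ω)‖ₑ ∂P ∂μ :=
        lintegral_prod _ hF.enorm.aemeasurable
    _ ≤ ∫⁻ u, ∫⁻ ω, ‖G (u, ω)‖ₑ ∂P ∂μ := lintegral_mono_ae h
    _ = ∫⁻ q, ‖G q‖ₑ ∂μ.prod P := (lintegral_prod _ hG.1.enorm).symm
    _ < ∞ := hG.2

lemma integrable_mul_comp_of_bdd {ν : Measure (T × Ω)} (hZ : Measurable (Function.uncurry Z))
    {F : T × Ω → ℝ} (hF : Integrable F ν) {f : T × E → ℝ} (hf : Measurable f)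
    (hfb : ∃ C, ∀ p, |f p| ≤ C) : Integrable (fun q => F q * f (q.1, Z q.1 q.2)) ν :=
  let ⟨_, hC⟩ := hfb
  hF.mul_bdd (hf.comp (measurable_fst.prodMk hZ)).aestronglyMeasurable (ae_of_all _ fun _ => hC _)

lemma integral_integral_mul_eq_of_ae_eq_condExp [SFinite μ] [IsFiniteMeasure P]
    (hZ : Measurable (Function.uncurry Z)) (hΓ : Integrable (Function.uncurry Γ) (μ.prod P))
    (hΓhat : Measurable Γhat)
    (hce : ∀ᵐ u ∂μ,
      (fun ω => Γhat (u, Z u ω)) =ᵐ[P] P[Γ u|MeasurableSpace.comap (Z u) inferInstance])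
    {f : T × E → ℝ} (hf : Measurable f) (hfb : ∃ C, ∀ p, |f p| ≤ C) :
    ∫ ω, ∫ u, Γhat (u, Z u ω) * f (u, Z u ω) ∂μ ∂P = ∫ ω, ∫ u, Γ u ω * f (u, Z u ω) ∂μ ∂P := by
  have hΓhat_int : Integrable (fun q : T × Ω => Γhat (q.1, Z q.1 q.2)) (μ.prod P) :=
    integrable_prod_of_ae_lintegral_enorm_le (hΓhat.comp (measurable_fst.prodMk hZ)) hΓ
      (hce.mono fun _ hu => lintegral_enorm_le_of_ae_eq_condExp hu)
  obtain ⟨C, hC⟩ := hfb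
  calc _ = ∫ u, ∫ ω, Γhat (u, Z u ω) * f (u, Z u ω) ∂P ∂μ :=
        (integral_integral_swap (integrable_mul_comp_of_bdd hZ hΓhat_int hf ⟨C, hC⟩)).symm
    _ = ∫ u, ∫ ω, Γ u ω * f (u, Z u ω) ∂P ∂μ := integral_congr_ae <| by
        filter_upwards [hce, hΓ.prod_right_ae] with u hu hΓu
        have hZu : Measurable (Z u) := hZ.comp measurable_prodMk_left
        exact integral_mul_eq_of_ae_eq_condExp hZu.comap_le hΓu hu
          ((hf.comp measurable_prodMk_left).comp (comap_measurable (Z u))).stronglyMeasurable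
          fun _ => hC _
    _ = _ := integral_integral_swap (integrable_mul_comp_of_bdd hZ hΓ hf ⟨C, hC⟩)

lemma ae_setIntegral_preimage_eq_zero [SFinite μ] [SFinite P]
    (hZ : Measurable (Function.uncurry Z))
    {F : T × Ω → ℝ} (hF : Integrable F (μ.prod P))
    (horth : ∀ f : T × E → ℝ, Measurable f → (∃ C, ∀ p, |f p| ≤ C) →
      ∫ q, F q * f (q.1, Z q.1 q.2) ∂μ.prod P = 0)
    {A : Set E} (hA : MeasurableSet A) : ∀ᵐ u ∂μ, ∫ ω in Z u ⁻¹' A, F (u, ω) ∂P = 0 := by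
  have hfA : Measurable fun p : T × E => A.indicator (1 : E → ℝ) p.2 :=
    (measurable_one.indicator hA).comp measurable_snd
  have hc : Integrable (fun u => ∫ ω, F (u, ω) * A.indicator 1 (Z u ω) ∂P) μ :=
    (integrable_mul_comp_of_bdd hZ hF hfA
      ⟨1, fun p => abs_indicator_one_le_one A p.2⟩).integral_prod_left
  have hc0 := hc.ae_eq_zero_of_forall_setIntegral_eq_zero fun B hB _ => by
    have hfAB : Measurable fun p : T × E =>
        A.indicator (1 : E → ℝ) p.2 * B.indicator (1 : T → ℝ) p.1 :=
      Measurable.mul hfA ((measurable_one.indicator hB).comp measurable_fst)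
    have hbAB : ∃ C, ∀ p : T × E, |A.indicator 1 p.2 * B.indicator (1 : T → ℝ) p.1| ≤ C :=
      ⟨1, fun p => by
        rw [abs_mul]
        exact mul_le_one₀ (abs_indicator_one_le_one A p.2) (abs_nonneg _)
          (abs_indicator_one_le_one B p.1)⟩
    have h := horth _ hfAB hbAB
    rw [integral_prod _ (integrable_mul_comp_of_bdd hZ hF hfAB hbAB)] at h
    simp_rw [← mul_assoc, integral_mul_const] at h
    exact (integral_mul_indicator_one_comp measurable_id
      (fun u => ∫ ω, F (u, ω) * A.indicator 1 (Z u ω) ∂P) hB).symm.trans h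
  have hZu : ∀ u, Measurable (Z u) := fun u => hZ.comp measurable_prodMk_left
  filter_upwards [hc0] with u hu
  rwa [← integral_mul_indicator_one_comp (hZu u) _ hA]

lemma ae_eq_condExp_of_forall_integral_integral_mul_eq [CountablyGenerated E]
    [IsFiniteMeasure μ] [IsFiniteMeasure P] (hZ : Measurable (Function.uncurry Z))
    (hΓ : Integrable (Function.uncurry Γ) (μ.prod P)) (hΓhat : Measurable Γhat)
    (h : ∀ f : T × E → ℝ, Measurable f → (∃ C, ∀ p, |f p| ≤ C) →
      ∫ ω, ∫ u, Γhat (u, Z u ω) * f (u, Z u ω) ∂μ ∂P = ∫ ω, ∫ u, Γ u ω * f (u, Z u ω) ∂μ ∂P) :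
    ∀ᵐ u ∂μ, (fun ω => Γhat (u, Z u ω)) =ᵐ[P] P[Γ u|MeasurableSpace.comap (Z u) inferInstance] := by
  have hΓhat_int : Integrable (fun q : T × Ω => Γhat (q.1, Z q.1 q.2)) (μ.prod P) := by
    have hΓhat_meas : Measurable fun q : T × Ω => Γhat (q.1, Z q.1 q.2) :=
      hΓhat.comp (measurable_fst.prodMk hZ)
    refine integrable_of_forall_integral_mul_truncSign_eq hΓhat_meas hΓ fun n => ?_
    have hfn : Measurable fun p => truncSign n (Γhat p) := (measurable_truncSign n).comp hΓhat
    have hfnb : ∃ C, ∀ p, |truncSign n (Γhat p)| ≤ C := ⟨1, fun _ => abs_truncSign_le_one _ _⟩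
    calc _ = _ := integral_prod_symm _ (integrable_mul_truncSign hΓhat_meas n)
      _ = _ := h _ hfn hfnb
      _ = _ := (integral_prod_symm _ (integrable_mul_comp_of_bdd hZ hΓ hfn hfnb)).symm
  have horth (f : T × E → ℝ) (hf : Measurable f) (hfb : ∃ C, ∀ p, |f p| ≤ C) :
      ∫ q, (Γhat (q.1, Z q.1 q.2) - Γ q.1 q.2) * f (q.1, Z q.1 q.2) ∂μ.prod P = 0 := by
    have h1 := integrable_mul_comp_of_bdd hZ hΓhat_int hf hfb
    have h2 : Integrable (fun q : T × Ω => Γ q.1 q.2 * f (q.1, Z q.1 q.2)) (μ.prod P) :=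
      integrable_mul_comp_of_bdd hZ hΓ hf hfb
    simp_rw [sub_mul]
    rw [integral_sub h1 h2, sub_eq_zero, integral_prod_symm _ h1, integral_prod_symm _ h2]
    exact h f hf hfb
  obtain ⟨S, hSc, hpi, huniv, hgen⟩ := exists_countable_isPiSystem_generateFrom_eq E
  have hS : ∀ᵐ u ∂μ, ∀ A ∈ S, ∫ ω in Z u ⁻¹' A, (Γhat (u, Z u ω) - Γ u ω) ∂P = 0 :=
    (ae_ball_iff hSc).2 fun A hA => ae_setIntegral_preimage_eq_zero hZ (hΓhat_int.sub hΓ) horth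
      (hgen ▸ measurableSet_generateFrom hA)
  filter_upwards [hS, hΓ.prod_right_ae, hΓhat_int.prod_right_ae] with u hu hΓu hΓhatu
  exact ae_eq_condExp_comap_of_isPiSystem (hZ.comp measurable_prodMk_left) hΓu
    (hΓhat.comp measurable_prodMk_left) hΓhatu hgen hpi huniv hu

end TimeIntegral

/-- **Lemma.** Let `Z` be a jointly measurable `𝓔`-valued process and `Γ` a
jointly measurable real-valued process with `E ∫_0^t |Γ_u| du < ∞` for all
`t`, and let `Γ̂` be a nonrandom measurable function on `[0,∞) × 𝓔`.  Then
`Γ̂(t,Z_t) = E[Γ_t | Z_t]` for Lebesgue-a.e. `t` iff for every bounded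
measurable `f`, `E ∫_0^t Γ̂(u,Z_u) f(u,Z_u) du = E ∫_0^t Γ_u f(u,Z_u) du` for
all `t ≥ 0`. -/
theorem conditional_expectation_function_iff
    {E : Type} [TopologicalSpace E] [PolishSpace E] [MeasurableSpace E] [BorelSpace E]
    {Ω : Type} [MeasurableSpace Ω]
    (P : Measure Ω) [IsProbabilityMeasure P]
    (Z : ℝ≥0 → Ω → E) (hZ : Measurable (Function.uncurry Z))
    (Γ : ℝ≥0 → Ω → ℝ)
    (hΓ : Measurable (Function.uncurry Γ))
    -- `E ∫_0^t |Γ_u| du < ∞` for all `t ≥ 0`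
    (hΓint : ∀ t : ℝ≥0, ∫⁻ ω, (∫⁻ u in Set.Iic t, (‖Γ u ω‖₊ : ℝ≥0∞) ∂leb) ∂P < ⊤)
    (Γhat : ℝ≥0 × E → ℝ) (hΓhat : Measurable Γhat) :
    (∃ N : Set ℝ≥0, leb N = 0 ∧
      ∀ t ∉ N,
        (fun ω => Γhat (t, Z t ω))
          =ᵐ[P] P[Γ t | MeasurableSpace.comap (Z t) inferInstance]) ↔
    (∀ f : ℝ≥0 × E → ℝ, Measurable f → (∃ Cb : ℝ, ∀ p, |f p| ≤ Cb) →
      ∀ t : ℝ≥0,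
        ∫ ω, (∫ u in Set.Iic t, Γhat (u, Z u ω) * f (u, Z u ω) ∂leb) ∂P =
          ∫ ω, (∫ u in Set.Iic t, Γ u ω * f (u, Z u ω) ∂leb) ∂P) := by
  have hΓ_int (t : ℝ≥0) : Integrable (Function.uncurry Γ) ((leb.restrict (Iic t)).prod P) :=
    integrable_uncurry_of_lintegral_lt_top hΓ (hΓint t)
  constructor
  · rintro ⟨N, hN, hce⟩ f hf hfb t
    exact integral_integral_mul_eq_of_ae_eq_condExp hZ (hΓ_int t) hΓhat
      (ae_restrict_of_ae ((measure_eq_zero_iff_ae_notMem.1 hN).mono hce)) hf hfb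
  · intro h
    have hce : ∀ᵐ u ∂leb,
        (fun ω => Γhat (u, Z u ω)) =ᵐ[P] P[Γ u|MeasurableSpace.comap (Z u) inferInstance] :=
      ae_of_forall_ae_restrict_Iic fun n =>
        ae_eq_condExp_of_forall_integral_integral_mul_eq hZ (hΓ_int n) hΓhat
          fun f hf hfb => h f hf hfb n
    exact ⟨_, ae_iff.1 hce, fun t ht => not_not.1 ht⟩

end Mimic
end
end

section
/- Let (Ω', F', Q') be a probability space supporting a jointly measurable ℝ^d-valued process a with E^{Q'} ∫_0^t ‖a_s‖ ds < ∞ for all t ≥ 0. Set Ω := [0,1] × Ω' with generic point ω = (u, ω'), U(u,ω') := u, F := B[0,1] ⊗ F', Q := λ_{[0,1]} × Q' (λ_{[0,1]} being Lebesgue measure on [0,1]), and extend a to Ω by a(u,ω') := a(ω'). Define the random times T_0^n := 0, T_i^n := (U + i − 1)/n for i = 1, …, n², and T_{n²+1}^n := ∞, and the sampled process a_t^n(ω) := Σ_{i=1}^{n²} a_{T_i^n(ω)}(ω) 1_{[T_i^n(ω), T_{i+1}^n(ω))}(t). Then lim_{n→∞} E^Q ∫_0^t ‖a_s − a_s^n‖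 ds = 0 for every t ≥ 0. -/
/-!
For `0 ≤ s ≤ t` and `n ≥ t + 1`, the sampled value `a^n_s(u, ω')` is `a` evaluated at the last
sampling time before `s`, which lags `s` by `fract (n s - u) / n` (and is `0` if that time is
negative). When `u` is uniform on `[0,1]`, so is `fract (n s - u)`, whatever `s` is; hence the
expected error is at most `∫_0^1 K(v/n) dv`, where `K h = E ∫ ‖g_s - g_{s-h}‖ ds` and
`g = a 1_{[0,t]}`. Continuity of translation in `L¹`, with dominated convergence over `ω'`
(`K ≤ 2 E ∫_0^t ‖a‖`), gives `K h → 0` as `h → 0`, and dominated convergence in `v` concludes.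
-/

open MeasureTheory Filter Set
open scoped ENNReal NNReal Topology

noncomputable section

namespace Mimic

/-- The sampled process
`a^n_t(u,ω') = ∑_{i=1}^{n²} a_{(u+i−1)/n}(ω') 1_{[T_i^n, T_{i+1}^n)}(t)`,
where `T_i^n = (u+i−1)/n` for `1 ≤ i ≤ n²` and `T_{n²+1}^n = ∞`. -/
def sampledProc {Ω' : Type*} {V : Type*} [NormedAddCommGroup V]
    (a : ℝ → Ω' → V) (n : ℕ) (t : ℝ) (ω : ℝ × Ω') : V :=
  ∑ i ∈ Finset.Icc 1 (n ^ 2),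
    Set.indicator
      {s : ℝ | (ω.1 + i - 1) / n ≤ s ∧ (i < n ^ 2 → s < (ω.1 + i) / n)}
      (fun _ => a ((ω.1 + i - 1) / n) ω.2) t

open Function

section ShiftError

variable {Ω' E : Type*} [MeasurableSpace Ω'] [NormedAddCommGroup E]

theorem tendsto_lintegral_enorm_sub_comp_sub {f : ℝ → E} (hf : Integrable f) :
    Tendsto (fun h => ∫⁻ x, ‖f x - f (x - h)‖ₑ) (𝓝 0) (𝓝 0) := by
  have : Fact ((1 : ℝ≥0∞) ≠ ∞) := ⟨ENNReal.one_ne_top⟩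
  set F := hf.toL1 f
  -- translations act continuously on `L¹`: the `ContinuousVAdd ℝᵈᵃᵃ (Lp E 1 volume)` instance
  have hcont : Continuous fun h : ℝ => DomAddAct.mk (-h) +ᵥ F :=
    (DomAddAct.continuous_mk.comp continuous_neg).vadd continuous_const
  have hlim := ((continuous_const (y := F)).edist hcont).tendsto 0
  rw [neg_zero, DomAddAct.mk_zero, zero_vadd, edist_self] at hlim
  refine hlim.congr fun h => ?_
  rw [Lp.edist_def, eLpNorm_one_eq_lintegral_enorm]
  refine lintegral_congr_ae ?_
  have hF : F =ᵐ[volume] f := hf.coeFn_toL1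
  have hFshift : (fun x => F (-h + x)) =ᵐ[volume] fun x => f (-h + x) :=
    (measurePreserving_add_left volume (-h)).quasiMeasurePreserving.ae_eq_comp hF
  filter_upwards [DomAddAct.vadd_Lp_ae_eq (DomAddAct.mk (-h)) F, hF, hFshift] with x h1 h2 h3
  rw [Pi.sub_apply, h1, h2, Equiv.symm_apply_apply, vadd_eq_add, h3, neg_add_eq_sub]

theorem lintegral_enorm_sub_comp_sub_le {f : ℝ → E} (hf : AEStronglyMeasurable f) (h : ℝ) :
    ∫⁻ s, ‖f s - f (s - h)‖ₑ ≤ 2 * ∫⁻ s, ‖f s‖ₑ :=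
  calc ∫⁻ s, ‖f s - f (s - h)‖ₑ ≤ ∫⁻ s, (‖f s‖ₑ + ‖f (s - h)‖ₑ) :=
        lintegral_mono fun _ => enorm_sub_le
    _ = 2 * ∫⁻ s, ‖f s‖ₑ := by
        rw [lintegral_add_left' hf.enorm, lintegral_sub_right_eq_self (fun s => ‖f s‖ₑ) h,
          two_mul]

def meanShiftError (Q' : Measure Ω') (F : Ω' → ℝ → E) (h : ℝ) : ℝ≥0∞ :=
  ∫⁻ ω', (∫⁻ s, ‖F ω' s - F ω' (s - h)‖ₑ) ∂Q'

variable {Q' : Measure Ω'} {F : Ω' → ℝ → E}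

theorem measurable_lintegral_enorm_sub_comp_sub (hF : StronglyMeasurable (uncurry F)) :
    Measurable fun p : ℝ × Ω' => ∫⁻ s, ‖F p.2 s - F p.2 (s - p.1)‖ₑ := by
  refine Measurable.lintegral_prod_right' (f := fun q : (ℝ × Ω') × ℝ =>
    ‖F q.1.2 q.2 - F q.1.2 (q.2 - q.1.1)‖ₑ) ?_
  exact ((hF.comp_measurable (measurable_fst.snd.prodMk measurable_snd)).sub
    (hF.comp_measurable (measurable_fst.snd.prodMk
      (measurable_snd.sub measurable_fst.fst)))).enorm

theorem measurable_meanShiftError [SFinite Q'] (hF : StronglyMeasurable (uncurry F)) :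
    Measurable (meanShiftError Q' F) :=
  (measurable_lintegral_enorm_sub_comp_sub hF).lintegral_prod_right'

theorem meanShiftError_le (hF : StronglyMeasurable (uncurry F)) (h : ℝ) :
    meanShiftError Q' F h ≤ 2 * ∫⁻ ω', (∫⁻ s, ‖F ω' s‖ₑ) ∂Q' := by
  rw [← lintegral_const_mul' _ _ ENNReal.ofNat_ne_top]
  exact lintegral_mono fun ω' => lintegral_enorm_sub_comp_sub_le
    (hF.comp_measurable measurable_prodMk_left).aestronglyMeasurable h

theorem tendsto_meanShiftError (hF : StronglyMeasurable (uncurry F))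
    (hfin : ∫⁻ ω', (∫⁻ s, ‖F ω' s‖ₑ) ∂Q' ≠ ∞) :
    Tendsto (meanShiftError Q' F) (𝓝 0) (𝓝 0) := by
  have hsection : ∀ ω', StronglyMeasurable (F ω') := fun ω' =>
    hF.comp_measurable measurable_prodMk_left
  have hnorm : Measurable fun ω' => ∫⁻ s, ‖F ω' s‖ₑ :=
    hF.enorm.lintegral_prod_right'
  have hlim := tendsto_lintegral_filter_of_dominated_convergence (μ := Q') (f := fun _ => 0)
    (fun ω' => 2 * ∫⁻ s, ‖F ω' s‖ₑ)
    (Eventually.of_forall fun _ => (measurable_lintegral_enorm_sub_comp_sub hF).comp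
      measurable_prodMk_left)
    (Eventually.of_forall fun h => Eventually.of_forall fun ω' =>
      lintegral_enorm_sub_comp_sub_le (hsection ω').aestronglyMeasurable h)
    (by
      rw [lintegral_const_mul' _ _ ENNReal.ofNat_ne_top]
      exact ENNReal.mul_ne_top ENNReal.ofNat_ne_top hfin)
    (by
      filter_upwards [ae_lt_top hnorm hfin] with ω' hω'
      exact tendsto_lintegral_enorm_sub_comp_sub
        ⟨(hsection ω').aestronglyMeasurable, hω'⟩)
  rwa [lintegral_zero] at hlim

theorem tendsto_setLIntegral_meanShiftError_div_natCast [SFinite Q']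
    (hF : StronglyMeasurable (uncurry F)) (hfin : ∫⁻ ω', (∫⁻ s, ‖F ω' s‖ₑ) ∂Q' ≠ ∞) :
    Tendsto (fun n : ℕ => ∫⁻ v in Icc (0 : ℝ) 1, meanShiftError Q' F (v / n)) atTop (𝓝 0) := by
  have hlim := tendsto_lintegral_filter_of_dominated_convergence
    (μ := volume.restrict (Icc (0 : ℝ) 1)) (f := fun _ => 0)
    (fun _ => 2 * ∫⁻ ω', (∫⁻ s, ‖F ω' s‖ₑ) ∂Q')
    (Eventually.of_forall fun _ => (measurable_meanShiftError hF).comp (measurable_div_const _))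
    (Eventually.of_forall fun _ => Eventually.of_forall fun _ => meanShiftError_le hF _)
    (by simpa [setLIntegral_const] using ENNReal.mul_ne_top ENNReal.ofNat_ne_top hfin)
    (Eventually.of_forall fun v =>
      (tendsto_meanShiftError hF hfin).comp (tendsto_const_div_atTop_nhds_zero_nat v))
  simpa using hlim

end ShiftError

theorem setLIntegral_Ioc_comp_fract (H : ℝ → ℝ≥0∞) (t : ℝ) :
    ∫⁻ w in Ioc t (t + 1), H (Int.fract w) = ∫⁻ v in Icc (0 : ℝ) 1, H v := by
  have hcircle : ∀ t' : ℝ, ∫⁻ w in Ioc t' (t' + 1), H (Int.fract w) =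
      ∫⁻ x : UnitAddCircle, H (AddCircle.equivIco 1 0 x) := fun t' => by
    simpa using UnitAddCircle.lintegral_preimage t' fun x => H (AddCircle.equivIco 1 0 x)
  rw [hcircle, ← hcircle 0, zero_add, ← setLIntegral_congr Ico_ae_eq_Ioc,
    setLIntegral_congr_fun measurableSet_Ico fun w hw => by rw [Int.fract_eq_self.2 hw]]
  exact setLIntegral_congr Ico_ae_eq_Icc

theorem setLIntegral_Icc_comp_fract_sub (H : ℝ → ℝ≥0∞) (c : ℝ) :
    ∫⁻ u in Icc (0 : ℝ) 1, H (Int.fract (c - u)) = ∫⁻ v in Icc (0 : ℝ) 1, H v := by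
  have hpre : (fun u : ℝ => c - u) ⁻¹' Ico (c - 1) c = Ioc 0 1 := by
    ext u
    simp only [mem_preimage, mem_Ico, mem_Ioc]
    constructor <;> rintro ⟨h₁, h₂⟩ <;> constructor <;> linarith
  rw [← setLIntegral_congr Ioc_ae_eq_Icc, ← hpre,
    (Measure.measurePreserving_sub_left volume c).setLIntegral_comp_preimage_emb
      (MeasurableEquiv.subLeft c).measurableEmbedding (fun w => H (Int.fract w)),
    setLIntegral_congr Ico_ae_eq_Ioc, ← setLIntegral_Ioc_comp_fract H (c - 1), sub_add_cancel]

theorem sampling_interval_iff_floor_eq {n i : ℕ} {s u : ℝ} (hs : 0 ≤ s) (hsn : s + 1 ≤ n)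
    (hu : 0 ≤ u) :
    ((u + i - 1) / n ≤ s ∧ (i < n ^ 2 → s < (u + i) / n)) ↔ ⌊n * s - u⌋ = (i : ℤ) - 1 := by
  have hn : (0 : ℝ) < n := by linarith
  rw [Int.floor_eq_iff, div_le_iff₀ hn, lt_div_iff₀ hn]
  push_cast
  constructor
  · rintro ⟨hlow, hhigh⟩
    refine ⟨by linarith, ?_⟩
    by_cases hi : i < n ^ 2
    · linarith [hhigh hi]
    · have : ((n ^ 2 : ℕ) : ℝ) ≤ i := by exact_mod_cast not_lt.1 hi
      push_cast at this
      nlinarith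
  · rintro ⟨hlow, hhigh⟩
    exact ⟨by linarith, fun _ => by linarith⟩

theorem sampledProc_eq_indicator {Ω' V : Type*} [NormedAddCommGroup V] (a : ℝ → Ω' → V)
    {n : ℕ} {s u : ℝ} (hs : 0 ≤ s) (hsn : s + 1 ≤ n) (hu : u ∈ Ico (0 : ℝ) 1) (ω' : Ω') :
    sampledProc a n s (u, ω') =
      (Ici 0).indicator (fun r => a r ω') (s - Int.fract (n * s - u) / n) := by
  obtain ⟨hu₀, hu₁⟩ := hu
  have hn : (0 : ℝ) < n := by linarith
  have hdelay : s - Int.fract (n * s - u) / n = (u + ⌊n * s - u⌋) / n := by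
    rw [← Int.self_sub_floor]
    field_simp
    ring
  simp only [sampledProc, indicator_apply, mem_ofPred_eq, mem_Ici,
    sampling_interval_iff_floor_eq hs hsn hu₀, hdelay]
  rcases lt_or_ge ⌊(n : ℝ) * s - u⌋ 0 with hneg | hnonneg
  · have hlt : (u + ⌊(n : ℝ) * s - u⌋) / n < 0 := by
      have : (⌊(n : ℝ) * s - u⌋ : ℝ) ≤ -1 := by exact_mod_cast Int.le_sub_one_of_lt hneg
      exact div_neg_of_neg_of_pos (by linarith) hn
    rw [if_neg (not_le.2 hlt)]
    refine Finset.sum_eq_zero fun i hi => if_neg ?_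
    have := (Finset.mem_Icc.1 hi).1
    omega
  · obtain ⟨m, hm⟩ := Int.eq_ofNat_of_zero_le hnonneg
    have hm_le : (m : ℝ) ≤ n * s - u := by
      have := Int.floor_le ((n : ℝ) * s - u)
      rwa [hm, Int.cast_natCast] at this
    have hmem : m + 1 ∈ Finset.Icc 1 (n ^ 2) := by
      refine Finset.mem_Icc.2 ⟨by omega, ?_⟩
      have : (m : ℝ) + 1 ≤ (n : ℝ) ^ 2 := by nlinarith
      exact_mod_cast this
    rw [Finset.sum_eq_single_of_mem (m + 1) hmem fun i _ hi => if_neg (by omega),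
      if_pos (by omega), if_pos (by rw [hm]; positivity), hm]
    push_cast
    rw [← add_assoc, add_sub_cancel_right]

theorem setLIntegral_Icc_lintegral_comp_fract_sub {α : Type*} [MeasurableSpace α]
    {μ : Measure α} [SFinite μ] {Φ : ℝ → α → ℝ≥0∞} (hΦ : Measurable (uncurry Φ))
    {c : α → ℝ} (hc : Measurable c) :
    ∫⁻ u in Icc (0 : ℝ) 1, ∫⁻ x, Φ (Int.fract (c x - u)) x ∂μ =
      ∫⁻ v in Icc (0 : ℝ) 1, ∫⁻ x, Φ v x ∂μ := by
  have hshift : Measurable fun p : ℝ × α => Φ (Int.fract (c p.2 - p.1)) p.2 :=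
    hΦ.comp (((hc.comp measurable_snd).sub measurable_fst).fract.prodMk measurable_snd)
  rw [lintegral_lintegral_swap hshift.aemeasurable, lintegral_lintegral_swap hΦ.aemeasurable]
  exact lintegral_congr fun x => setLIntegral_Icc_comp_fract_sub (Φ · x) (c x)

theorem stronglyMeasurable_uncurry_indicator {Ω' V : Type*} [MeasurableSpace Ω'] [Zero V]
    [TopologicalSpace V] {a : ℝ → Ω' → V} (ha : StronglyMeasurable (uncurry a)) {S : Set ℝ}
    (hS : MeasurableSet S) :
    StronglyMeasurable (uncurry fun ω' => S.indicator (a · ω')) :=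
  (ha.comp_measurable measurable_swap).indicator (hS.preimage measurable_snd)

theorem lintegral_sampling_error_le {Ω' V : Type*} [MeasurableSpace Ω'] [NormedAddCommGroup V]
    (Q' : Measure Ω') [SFinite Q'] {a : ℝ → Ω' → V} (ha : StronglyMeasurable (uncurry a))
    {t : ℝ} {n : ℕ} (hn : t + 1 ≤ n) :
    ∫⁻ ω, (∫⁻ s in Icc (0 : ℝ) t, ‖a s ω.2 - sampledProc a n s ω‖ₑ)
        ∂((volume.restrict (Icc (0 : ℝ) 1)).prod Q') ≤
      ∫⁻ v in Icc (0 : ℝ) 1,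
        meanShiftError Q' (fun ω' => (Icc 0 t).indicator (a · ω')) (v / n) := by
  set g : Ω' → ℝ → V := fun ω' => (Icc 0 t).indicator (a · ω')
  have hg : StronglyMeasurable (uncurry g) :=
    stronglyMeasurable_uncurry_indicator ha measurableSet_Icc
  set Φ : ℝ → Ω' × ℝ → ℝ≥0∞ := fun v x => ‖g x.1 x.2 - g x.1 (x.2 - v / n)‖ₑ
  have hΦ : Measurable (uncurry Φ) :=
    ((hg.comp_measurable measurable_snd).sub (hg.comp_measurable (measurable_snd.fst.prodMk
      (measurable_snd.snd.sub (measurable_fst.div_const _))))).enorm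
  have herr : ∀ u ∈ Ico (0 : ℝ) 1, ∀ ω', ∀ s ∈ Icc (0 : ℝ) t,
      ‖a s ω' - sampledProc a n s (u, ω')‖ₑ = Φ (Int.fract (n * s - u)) (ω', s) := by
    intro u hu ω' s hs
    have hdelay : s - Int.fract (n * s - u) / n ≤ t := by
      have := div_nonneg (Int.fract_nonneg ((n : ℝ) * s - u)) (Nat.cast_nonneg (α := ℝ) n)
      linarith [hs.2]
    rw [sampledProc_eq_indicator a hs.1 (by linarith [hs.2]) hu]
    simp only [Φ, g, indicator_apply, mem_Ici, mem_Icc, hs.1, hs.2, hdelay, and_true, if_true]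
  calc _ ≤ ∫⁻ u in Icc (0 : ℝ) 1,
          ∫⁻ ω', (∫⁻ s in Icc 0 t, ‖a s ω' - sampledProc a n s (u, ω')‖ₑ) ∂Q' :=
        lintegral_prod_le _
    _ = ∫⁻ u in Icc (0 : ℝ) 1,
          ∫⁻ x, Φ (Int.fract (n * x.2 - u)) x ∂(Q'.prod (volume.restrict (Icc 0 t))) := by
        rw [← setLIntegral_congr Ico_ae_eq_Icc, ← setLIntegral_congr Ico_ae_eq_Icc]
        refine setLIntegral_congr_fun measurableSet_Ico fun u hu => ?_
        have hm : Measurable fun x : Ω' × ℝ => Φ (Int.fract (n * x.2 - u)) x :=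
          hΦ.comp (((measurable_snd.const_mul _).sub_const u).fract.prodMk measurable_id)
        rw [lintegral_prod _ hm.aemeasurable]
        exact lintegral_congr fun ω' =>
          setLIntegral_congr_fun measurableSet_Icc fun s hs => herr u hu ω' s hs
    _ = ∫⁻ v in Icc (0 : ℝ) 1, ∫⁻ x, Φ v x ∂(Q'.prod (volume.restrict (Icc 0 t))) :=
        setLIntegral_Icc_lintegral_comp_fract_sub hΦ (measurable_snd.const_mul _)
    _ ≤ _ := by
        refine lintegral_mono fun v => ?_
        rw [lintegral_prod (Φ v) (hΦ.comp measurable_prodMk_left).aemeasurable]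
        exact lintegral_mono fun ω' => setLIntegral_le_lintegral _ _

theorem sampled_process_approximation_general
    {Ω' : Type} [MeasurableSpace Ω']
    (Q' : Measure Ω') [IsProbabilityMeasure Q']
    {d : ℕ}
    (a : ℝ → Ω' → EuclideanSpace ℝ (Fin d))
    (ha : Measurable (Function.uncurry a))
    -- `E^{Q'} ∫_0^t ‖a_s‖ ds < ∞` for all `t ≥ 0`
    (haint : ∀ t : ℝ,
      ∫⁻ ω', (∫⁻ s in Set.Icc (0 : ℝ) t, (‖a s ω'‖₊ : ℝ≥0∞)) ∂Q' < ⊤) :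
    ∀ t : ℝ, 0 ≤ t →
      Tendsto (fun n : ℕ =>
          ∫⁻ ω, (∫⁻ s in Set.Icc (0 : ℝ) t,
              (‖a s ω.2 - sampledProc a n s ω‖₊ : ℝ≥0∞))
            ∂(((volume : Measure ℝ).restrict (Set.Icc (0 : ℝ) 1)).prod Q'))
        atTop (𝓝 0) := by
  intro t _
  set g : Ω' → ℝ → EuclideanSpace ℝ (Fin d) := fun ω' => (Icc 0 t).indicator (a · ω')
  have hg : StronglyMeasurable (uncurry g) :=
    stronglyMeasurable_uncurry_indicator ha.stronglyMeasurable measurableSet_Icc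
  have hfin : ∫⁻ ω', (∫⁻ s, ‖g ω' s‖ₑ) ∂Q' ≠ ∞ := by
    have hsection : ∀ ω', ∫⁻ s, ‖g ω' s‖ₑ = ∫⁻ s in Icc 0 t, ‖a s ω'‖ₑ := fun ω' => by
      simp only [g, enorm_indicator_eq_indicator_enorm, lintegral_indicator measurableSet_Icc]
    rw [lintegral_congr hsection]
    exact (haint t).ne
  refine tendsto_of_tendsto_of_tendsto_of_le_of_le' tendsto_const_nhds
    (tendsto_setLIntegral_meanShiftError_div_natCast hg hfin)
    (Eventually.of_forall fun _ => zero_le) ?_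
  filter_upwards [(tendsto_natCast_atTop_atTop (R := ℝ)).eventually_ge_atTop (t + 1)] with n hn
  exact lintegral_sampling_error_le Q' ha.stronglyMeasurable hn

/-- **Proposition.** Let `a` be a jointly measurable `ℝ^d`-valued process on
`(Ω',F',Q')` with `E^{Q'} ∫_0^t ‖a_s‖ ds < ∞` for all `t ≥ 0`.  On
`Ω = [0,1] × Ω'` with `Q = λ_{[0,1]} × Q'`, let `a^n` be the process sampled
at the random times `T_i^n = (U+i−1)/n`, `i = 1,…,n²`.  Then
`E^Q ∫_0^t ‖a_s − a_s^n‖ ds → 0` as `n → ∞`, for every `t ≥ 0`. -/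
theorem sampled_process_approximation
    {Ω' : Type} [MeasurableSpace Ω']
    (Q' : Measure Ω') [IsProbabilityMeasure Q']
    {d : ℕ} (hd : 0 < d)
    (a : ℝ → Ω' → EuclideanSpace ℝ (Fin d))
    (ha : Measurable (Function.uncurry a))
    -- `E^{Q'} ∫_0^t ‖a_s‖ ds < ∞` for all `t ≥ 0`
    (haint : ∀ t : ℝ,
      ∫⁻ ω', (∫⁻ s in Set.Icc (0 : ℝ) t, (‖a s ω'‖₊ : ℝ≥0∞)) ∂Q' < ⊤) :
    ∀ t : ℝ, 0 ≤ t →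
      Tendsto (fun n : ℕ =>
          ∫⁻ ω, (∫⁻ s in Set.Icc (0 : ℝ) t,
              (‖a s ω.2 - sampledProc a n s ω‖₊ : ℝ≥0∞))
            ∂(((volume : Measure ℝ).restrict (Set.Icc (0 : ℝ) 1)).prod Q'))
        atTop (𝓝 0) :=
  sampled_process_approximation_general Q' a ha haint

end Mimic
end
end
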